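/- arXiv:1907.12512 — 5 statements merged into one kernel-verified Lean document; each statement's English description precedes it below -/
import Mathlib

section
/- Let (V, g, J) be a 6-dimensional real inner product space with compatible complex structure J, and let Ω⁺ be a 3-form satisfying Ω⁺(X,Y,Z) = -Ω⁺(X,JY,JZ). Let h♯ be a self-adjoint endomorphism of V anticommuting with J, and define η = h♯·Ω⁺ by η(X,Y,Z) = -Ω⁺(h♯X,Y,Z) - Ω⁺(X,h♯Y,Z) - Ω⁺(X,Y,h♯Z). Then η(JX,Y,Z) + η(X,JY,Z) + η(X,Y,JZ) = η(JX,JY,JZ) for all X,Y,Z. -/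
/-!
Write `h` for `h♯`. With `J² = -1` and antisymmetry, the condition `Ω(x, Jy, Jz) = -Ω(x, y, z)`
lets a single `J` move freely between the slots of `Ω`. Moving every `J` into the last slot (using
`hJ = -Jh` and `J² = -1` again) turns both sides into `-a - b - c`, where
`a = Ω(hX, Y, JZ)`, `b = Ω(X, hY, JZ)`, `c = Ω(X, Y, J hZ)`.
-/

namespace AlternatingMap

variable {R M N : Type*} [CommRing R] [AddCommGroup M] [Module R M] [AddCommGroup N] [Module R N]
  (Ω : M [⋀^Fin 3]→ₗ[R] N)

theorem map_vec3_neg_zero (a b c : M) : Ω ![-a, b, c] = -Ω ![a, b, c] := by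
  simp only [← curryLeft_apply_apply, map_neg, neg_apply]

theorem map_vec3_neg_one (a b c : M) : Ω ![a, -b, c] = -Ω ![a, b, c] := by
  simp only [← curryLeft_apply_apply, map_neg, neg_apply]

theorem map_vec3_neg_two (a b c : M) : Ω ![a, b, -c] = -Ω ![a, b, c] := by
  simp only [← curryLeft_apply_apply, map_neg, neg_apply]

theorem map_vec3_swap_zero_one (a b c : M) : Ω ![b, a, c] = -Ω ![a, b, c] := by
  convert Ω.map_swap ![a, b, c] (i := 0) (j := 1) (by decide) using 2
  ext i
  fin_cases i <;> rfl

section ComplexStructure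

variable {Ω} {J : M →ₗ[R] M}

theorem map_vec3_J_one (hJ2 : ∀ x, J (J x) = -x)
    (hΩ : ∀ x y z, Ω ![x, y, z] = -Ω ![x, J y, J z]) (x y z : M) :
    Ω ![x, J y, z] = Ω ![x, y, J z] := by
  rw [hΩ x y (J z), hJ2, map_vec3_neg_two, neg_neg]

theorem map_vec3_J_zero (hJ2 : ∀ x, J (J x) = -x)
    (hΩ : ∀ x y z, Ω ![x, y, z] = -Ω ![x, J y, J z]) (x y z : M) :
    Ω ![J x, y, z] = Ω ![x, y, J z] := by
  rw [← neg_neg (Ω ![J x, y, z]), ← map_vec3_swap_zero_one, map_vec3_J_one hJ2 hΩ,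
    map_vec3_swap_zero_one, neg_neg]

end ComplexStructure

end AlternatingMap

open RealInnerProductSpace

open AlternatingMap in
theorem stmt2_general {V : Type} [NormedAddCommGroup V] [InnerProductSpace ℝ V]
    (J : V →ₗ[ℝ] V)
    (hJ2 : ∀ x : V, J (J x) = -x)
    (Ω : AlternatingMap ℝ V ℝ (Fin 3))
    (hΩ : ∀ x y z : V, Ω ![x, y, z] = -Ω ![x, J y, J z])
    (hs : V →ₗ[ℝ] V)
    (hanti : ∀ x : V, hs (J x) = -J (hs x))
    (η : V → V → V → ℝ)
    (hη : ∀ x y z : V,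
      η x y z = -Ω ![hs x, y, z] - Ω ![x, hs y, z] - Ω ![x, y, hs z]) :
    ∀ X Y Z : V,
      η (J X) Y Z + η X (J Y) Z + η X Y (J Z) = η (J X) (J Y) (J Z) := by
  intro X Y Z
  simp only [hη, hanti, hJ2, map_neg, map_vec3_neg_zero, map_vec3_neg_one, map_vec3_neg_two,
    map_vec3_J_zero hJ2 hΩ, map_vec3_J_one hJ2 hΩ]
  ring

/-- Let `Ω⁺` be a 3-form on a 6-dimensional real inner product space with
compatible complex structure `J` satisfying `Ω⁺(X,Y,Z) = -Ω⁺(X,JY,JZ)`, and `h♯` a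
self-adjoint endomorphism anticommuting with `J`.  With
`η = h♯·Ω⁺`, `(A·Ω)(X,Y,Z) = -Ω(AX,Y,Z) - Ω(X,AY,Z) - Ω(X,Y,AZ)`, one has
`η(JX,Y,Z) + η(X,JY,Z) + η(X,Y,JZ) = η(JX,JY,JZ)`. -/
theorem stmt2 {V : Type} [NormedAddCommGroup V] [InnerProductSpace ℝ V]
    (hdim : Module.finrank ℝ V = 6)
    (J : V →ₗ[ℝ] V)
    (hJ2 : ∀ x : V, J (J x) = -x)
    (hJg : ∀ x y : V, ⟪J x, J y⟫ = ⟪x, y⟫)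
    (Ω : AlternatingMap ℝ V ℝ (Fin 3))
    (hΩ : ∀ x y z : V, Ω ![x, y, z] = -Ω ![x, J y, J z])
    (hs : V →ₗ[ℝ] V)
    (hsa : ∀ x y : V, ⟪hs x, y⟫ = ⟪x, hs y⟫)
    (hanti : ∀ x : V, hs (J x) = -J (hs x))
    (η : V → V → V → ℝ)
    (hη : ∀ x y z : V,
      η x y z = -Ω ![hs x, y, z] - Ω ![x, hs y, z] - Ω ![x, y, hs z]) :
    ∀ X Y Z : V,
      η (J X) Y Z + η X (J Y) Z + η X Y (J Z) = η (J X) (J Y) (J Z) :=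
  stmt2_general J hJ2 Ω hΩ hs hanti η hη
end

section
/- Let (V, g, J) be a 6-dimensional real inner product space with compatible complex structure J, ω(X,Y)=g(JX,Y), and let η be a J-invariant 2-form (η(JX,JY)=η(X,Y)) that is pointwise orthogonal to ω. Suppose T satisfies the constant type identity g(T(X,Y),T(Z,W)) = g(X,Z)g(Y,W) - g(X,W)g(Y,Z) - ω(X,Z)ω(Y,W) + ω(X,W)ω(Y,Z). Then Σ_{i,j,k,q} g(T(e_i,e_q), T(e_j,e_k)) η(e_q,e_j) η(e_i,e_k) = -2‖h‖², where h(X,Y) = η(JX,Y) and ‖h‖² = Σ_{i,j} h(e_i,e_j)². -/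
open RealInnerProductSpace

/-- On a 6-dimensional real inner product space with compatible complex
structure `J` and `ω(X,Y)=g(JX,Y)`, let `η` be a `J`-invariant 2-form pointwise
orthogonal to `ω`, and `T` satisfy the constant type identity.  Then
`Σ_{i,j,k,q} g(T(e_i,e_q), T(e_j,e_k)) η(e_q,e_j) η(e_i,e_k) = -2‖h‖²`,
where `h(X,Y) = η(JX,Y)` and `‖h‖² = Σ_{i,j} h(e_i,e_j)²`. -/
theorem stmt7 {V : Type} [NormedAddCommGroup V] [InnerProductSpace ℝ V]
    (b : OrthonormalBasis (Fin 6) ℝ V)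
    (J : V →ₗ[ℝ] V)
    (hJ2 : ∀ x : V, J (J x) = -x)
    (hJg : ∀ x y : V, ⟪J x, J y⟫ = ⟪x, y⟫)
    (η : V →ₗ[ℝ] V →ₗ[ℝ] ℝ)
    (hskew : ∀ x y : V, η x y = -η y x)
    (hJinv : ∀ x y : V, η (J x) (J y) = η x y)
    (horth : ∑ i : Fin 6, ∑ j : Fin 6, η (b i) (b j) * ⟪J (b i), b j⟫ = 0)
    (T : V →ₗ[ℝ] V →ₗ[ℝ] V)
    (hT : ∀ X Y Z W : V,
      ⟪T X Y, T Z W⟫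
        = ⟪X, Z⟫ * ⟪Y, W⟫ - ⟪X, W⟫ * ⟪Y, Z⟫
          - ⟪J X, Z⟫ * ⟪J Y, W⟫ + ⟪J X, W⟫ * ⟪J Y, Z⟫) :
    ∑ i : Fin 6, ∑ j : Fin 6, ∑ k : Fin 6, ∑ q : Fin 6,
      ⟪T (b i) (b q), T (b j) (b k)⟫ * η (b q) (b j) * η (b i) (b k)
      = -2 * ∑ i : Fin 6, ∑ j : Fin 6, (η (J (b i)) (b j)) ^ 2 := by
  -- matrix entries
  set A : Fin 6 → Fin 6 → ℝ := fun i j => η (b i) (b j) with hAdef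
  set W : Fin 6 → Fin 6 → ℝ := fun i j => ⟪J (b i), b j⟫ with hWdef
  have hb : ∀ i j : Fin 6, ⟪b i, b j⟫ = if i = j then (1:ℝ) else 0 :=
    orthonormal_iff_ite.mp b.orthonormal
  have hAskew : ∀ i j : Fin 6, A i j = -A j i := fun i j => hskew (b i) (b j)
  -- ⟪J x, y⟫ = -⟪x, J y⟫
  have hJswap : ∀ x y : V, ⟪J x, y⟫ = -⟪x, J y⟫ := by
    intro x y
    have h := hJg x (J y)
    rw [hJ2, inner_neg_right] at h
    linarith
  -- expansion of J (b i) in the basis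
  have hJb : ∀ i : Fin 6, J (b i) = ∑ j : Fin 6, W i j • b j := by
    intro i
    conv_lhs => rw [← b.sum_repr' (J (b i))]
    refine Finset.sum_congr rfl fun j _ => ?_
    rw [real_inner_comm]
  -- η (b q) (J (b i)) = ∑_j W i j * A q j
  have hηJ2 : ∀ q i : Fin 6, η (b q) (J (b i)) = ∑ j : Fin 6, W i j * A q j := by
    intro q i
    rw [hJb i, map_sum]
    exact Finset.sum_congr rfl fun j _ => by rw [map_smul, smul_eq_mul]
  -- η (J (b i)) (b j) = ∑_p W i p * A p j
  have hηJ1 : ∀ i j : Fin 6, η (J (b i)) (b j) = ∑ p : Fin 6, W i p * A p j := by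
    intro i j
    rw [hJb i, map_sum, LinearMap.sum_apply]
    exact Finset.sum_congr rfl fun p _ => by rw [map_smul, LinearMap.smul_apply, smul_eq_mul]
  -- h is symmetric
  have hsym : ∀ x y : V, η (J x) y = η (J y) x := by
    intro x y
    have h := hJinv (J x) y
    rw [hJ2, map_neg, LinearMap.neg_apply] at h
    rw [← h, hskew, neg_neg]
  -- Parseval: ∑_i W i p * W i r = δ
  have hWW : ∀ p r : Fin 6, ∑ i : Fin 6, W i p * W i r = if p = r then (1:ℝ) else 0 := by
    intro p r
    have e : ∀ i : Fin 6, W i p * W i r = ⟪J (b p), b i⟫ * ⟪b i, J (b r)⟫ := by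
      intro i
      simp only [hWdef]
      rw [hJswap (b i) (b p), hJswap (b i) (b r), real_inner_comm (b i) (J (b p))]
      ring
    rw [Finset.sum_congr rfl fun i _ => e i, b.sum_inner_mul_inner, hJg, hb]
  -- the norm identity: ∑ h² = ∑ A²
  have hnorm : ∑ i : Fin 6, ∑ j : Fin 6, (η (J (b i)) (b j))^2
      = ∑ p : Fin 6, ∑ j : Fin 6, (A p j)^2 := by
    have e1 : ∀ i j : Fin 6, (η (J (b i)) (b j))^2
        = ∑ p : Fin 6, ∑ r : Fin 6, (W i p * W i r) * (A p j * A r j) := by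
      intro i j
      rw [hηJ1, sq, Finset.sum_mul_sum]
      exact Finset.sum_congr rfl fun p _ => Finset.sum_congr rfl fun r _ => by ring
    simp only [e1]
    rw [Finset.sum_comm]
    have e2 : ∀ j : Fin 6,
        (∑ i : Fin 6, ∑ p : Fin 6, ∑ r : Fin 6, (W i p * W i r) * (A p j * A r j))
        = ∑ p : Fin 6, (A p j)^2 := by
      intro j
      rw [Finset.sum_comm]
      refine Finset.sum_congr rfl fun p _ => ?_
      rw [Finset.sum_comm]
      have e3 : ∀ r : Fin 6, ∑ i : Fin 6, (W i p * W i r) * (A p j * A r j)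
          = (if p = r then (1:ℝ) else 0) * (A p j * A r j) := fun r => by
        rw [← Finset.sum_mul, hWW]
      simp only [e3, ite_mul, one_mul, zero_mul, Finset.sum_ite_eq, Finset.mem_univ, if_true]
      ring
    simp only [e2]
    exact Finset.sum_comm
  -- split the big sum
  have hsplit : ∑ i : Fin 6, ∑ j : Fin 6, ∑ k : Fin 6, ∑ q : Fin 6,
      ⟪T (b i) (b q), T (b j) (b k)⟫ * η (b q) (b j) * η (b i) (b k)
      = (∑ i : Fin 6, ∑ j : Fin 6, ∑ k : Fin 6, ∑ q : Fin 6,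
          (if i = j then (1:ℝ) else 0) * (if q = k then (1:ℝ) else 0) * A q j * A i k)
        - (∑ i : Fin 6, ∑ j : Fin 6, ∑ k : Fin 6, ∑ q : Fin 6,
          (if i = k then (1:ℝ) else 0) * (if q = j then (1:ℝ) else 0) * A q j * A i k)
        - (∑ i : Fin 6, ∑ j : Fin 6, ∑ k : Fin 6, ∑ q : Fin 6,
          (W i j * W q k) * A q j * A i k)
        + (∑ i : Fin 6, ∑ j : Fin 6, ∑ k : Fin 6, ∑ q : Fin 6,
          (W i k * W q j) * A q j * A i k) := by
    simp only [hT, hb, ← hWdef, ← hAdef]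
    simp only [sub_mul, add_mul, Finset.sum_add_distrib, Finset.sum_sub_distrib]
    rfl
  rw [hsplit]
  have hAdiag : ∀ i : Fin 6, A i i = 0 := fun i => by have := hAskew i i; linarith
  -- term 1
  have hS1 : (∑ i : Fin 6, ∑ j : Fin 6, ∑ k : Fin 6, ∑ q : Fin 6,
      (if i = j then (1:ℝ) else 0) * (if q = k then (1:ℝ) else 0) * A q j * A i k)
      = - ∑ p : Fin 6, ∑ j : Fin 6, (A p j)^2 := by
    have step : ∀ i j k : Fin 6,
        (∑ q : Fin 6, (if i = j then (1:ℝ) else 0) * (if q = k then (1:ℝ) else 0) * A q j * A i k)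
        = (if i = j then (1:ℝ) else 0) * (A k j * A i k) := by
      intro i j k
      rw [show (∑ q : Fin 6, (if i = j then (1:ℝ) else 0) * (if q = k then (1:ℝ) else 0) * A q j * A i k)
          = ∑ q : Fin 6, (if q = k then (if i = j then (1:ℝ) else 0) * (A q j * A i k) else 0) from
        Finset.sum_congr rfl fun q _ => by split_ifs <;> ring]
      simp [Finset.sum_ite_eq']
    simp only [step]
    have step2 : ∀ i j : Fin 6,
        (∑ k : Fin 6, (if i = j then (1:ℝ) else 0) * (A k j * A i k))
        = (if i = j then (1:ℝ) else 0) * ∑ k : Fin 6, A k j * A i k := by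
      intro i j; rw [Finset.mul_sum]
    simp only [step2]
    have step3 : ∀ i : Fin 6,
        (∑ j : Fin 6, (if i = j then (1:ℝ) else 0) * ∑ k : Fin 6, A k j * A i k)
        = ∑ k : Fin 6, A k i * A i k := by
      intro i
      rw [show (∑ j : Fin 6, (if i = j then (1:ℝ) else 0) * ∑ k : Fin 6, A k j * A i k)
          = ∑ j : Fin 6, (if i = j then (∑ k : Fin 6, A k j * A i k) else 0) from
        Finset.sum_congr rfl fun j _ => by split_ifs <;> ring]
      simp [Finset.sum_ite_eq]
    simp only [step3]
    rw [← Finset.sum_neg_distrib]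
    refine Finset.sum_congr rfl fun i _ => ?_
    rw [← Finset.sum_neg_distrib]
    refine Finset.sum_congr rfl fun k _ => ?_
    rw [hAskew k i]; ring
  -- term 2
  have hS2 : (∑ i : Fin 6, ∑ j : Fin 6, ∑ k : Fin 6, ∑ q : Fin 6,
      (if i = k then (1:ℝ) else 0) * (if q = j then (1:ℝ) else 0) * A q j * A i k) = 0 := by
    have step : ∀ i j k : Fin 6,
        (∑ q : Fin 6, (if i = k then (1:ℝ) else 0) * (if q = j then (1:ℝ) else 0) * A q j * A i k)
        = (if i = k then (1:ℝ) else 0) * (A j j * A i k) := by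
      intro i j k
      rw [show (∑ q : Fin 6, (if i = k then (1:ℝ) else 0) * (if q = j then (1:ℝ) else 0) * A q j * A i k)
          = ∑ q : Fin 6, (if q = j then (if i = k then (1:ℝ) else 0) * (A q j * A i k) else 0) from
        Finset.sum_congr rfl fun q _ => by split_ifs <;> ring]
      simp [Finset.sum_ite_eq']
    simp only [step, hAdiag, zero_mul, mul_zero, Finset.sum_const_zero]
  -- term 3
  have hS3 : (∑ i : Fin 6, ∑ j : Fin 6, ∑ k : Fin 6, ∑ q : Fin 6,
      (W i j * W q k) * A q j * A i k)
      = ∑ i : Fin 6, ∑ q : Fin 6, (η (J (b i)) (b q))^2 := by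
    refine Finset.sum_congr rfl fun i _ => ?_
    rw [Finset.sum_comm]
    rw [show (∑ k : Fin 6, ∑ j : Fin 6, ∑ q : Fin 6, (W i j * W q k) * A q j * A i k)
        = ∑ k : Fin 6, ∑ q : Fin 6, ∑ j : Fin 6, (W i j * W q k) * A q j * A i k from
      Finset.sum_congr rfl fun k _ => Finset.sum_comm]
    rw [Finset.sum_comm]
    refine Finset.sum_congr rfl fun q _ => ?_
    have expand : (∑ k : Fin 6, ∑ j : Fin 6, (W i j * W q k) * A q j * A i k)
        = (∑ j : Fin 6, W i j * A q j) * (∑ k : Fin 6, W q k * A i k) := by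
      rw [Finset.sum_mul_sum, Finset.sum_comm]
      exact Finset.sum_congr rfl fun k _ => Finset.sum_congr rfl fun j _ => by ring
    rw [expand, ← hηJ2, ← hηJ2, hskew (b q) (J (b i)), hskew (b i) (J (b q)),
      hsym (b q) (b i)]
    ring
  -- term 4
  have hS4 : (∑ i : Fin 6, ∑ j : Fin 6, ∑ k : Fin 6, ∑ q : Fin 6,
      (W i k * W q j) * A q j * A i k) = 0 := by
    have step : ∀ i j : Fin 6,
        (∑ k : Fin 6, ∑ q : Fin 6, (W i k * W q j) * A q j * A i k)
        = (∑ k : Fin 6, A i k * W i k) * (∑ q : Fin 6, A q j * W q j) := by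
      intro i j
      rw [Finset.sum_mul_sum]
      exact Finset.sum_congr rfl fun k _ => Finset.sum_congr rfl fun q _ => by ring
    simp only [step]
    have step2 : ∀ i : Fin 6,
        (∑ j : Fin 6, (∑ k : Fin 6, A i k * W i k) * (∑ q : Fin 6, A q j * W q j))
        = (∑ k : Fin 6, A i k * W i k) * (∑ j : Fin 6, ∑ q : Fin 6, A q j * W q j) := by
      intro i; rw [Finset.mul_sum]
    simp only [step2]
    rw [← Finset.sum_mul]
    have h2 : (∑ j : Fin 6, ∑ q : Fin 6, A q j * W q j) = 0 := by
      rw [Finset.sum_comm]; exact horth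
    rw [h2, mul_zero]
  rw [hS1, hS2, hS3, hS4, hnorm]
  ring
end

section
/- Let (V, g, J) be a 6-dimensional real inner product space with compatible complex structure J, and Ω⁺ a 3-form satisfying Ω⁺(X,Y,Z) = -Ω⁺(X,JY,JZ) for all X,Y,Z. For any 3-form η satisfying η(X,Y,Z) = η(JX,JY,Z) + η(JX,Y,JZ) + η(X,JY,JZ), the tensor h_η(X,Y) := Σ_{i,j}(η(X,e_i,e_j)Ω⁺(Y,e_i,e_j) + η(Y,e_i,e_j)Ω⁺(X,e_i,e_j)) satisfies h_η(JX,JY) = -h_η(X,Y), i.e., h_η is skew J-invariant. -/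
open RealInnerProductSpace


section auxStmt9
variable {V : Type} [NormedAddCommGroup V] [InnerProductSpace ℝ V]

private lemma stmt9_slot0 (g : AlternatingMap ℝ V ℝ (Fin 3)) (a c : V) :
    ∃ F : V →ₗ[ℝ] ℝ, ∀ v, F v = g ![v, a, c] := by
  refine ⟨g.toMultilinearMap.toLinearMap ![0, a, c] 0, fun v => ?_⟩
  have h : Function.update ![(0:V), a, c] 0 v = ![v, a, c] := by
    ext k; fin_cases k <;> simp [Function.update]
  simp [MultilinearMap.toLinearMap_apply, h]

private lemma stmt9_slot1 (g : AlternatingMap ℝ V ℝ (Fin 3)) (a c : V) :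
    ∃ F : V →ₗ[ℝ] ℝ, ∀ v, F v = g ![a, v, c] := by
  refine ⟨g.toMultilinearMap.toLinearMap ![a, 0, c] 1, fun v => ?_⟩
  have h : Function.update ![a, (0:V), c] 1 v = ![a, v, c] := by
    ext k; fin_cases k <;> simp [Function.update]
  simp [MultilinearMap.toLinearMap_apply, h]

private lemma stmt9_slot2 (g : AlternatingMap ℝ V ℝ (Fin 3)) (a c : V) :
    ∃ F : V →ₗ[ℝ] ℝ, ∀ v, F v = g ![a, c, v] := by
  refine ⟨g.toMultilinearMap.toLinearMap ![a, c, 0] 2, fun v => ?_⟩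
  have h : Function.update ![a, c, (0:V)] 2 v = ![a, c, v] := by
    ext k; fin_cases k <;> simp [Function.update]
  simp [MultilinearMap.toLinearMap_apply, h]

private lemma stmt9_swap12 (g : AlternatingMap ℝ V ℝ (Fin 3)) (x y z : V) :
    g ![x, z, y] = -g ![x, y, z] := by
  have h := g.map_swap ![x, y, z] (i := 1) (j := 2) (by decide)
  have e : (![x, y, z] ∘ Equiv.swap (1 : Fin 3) 2) = ![x, z, y] := by
    ext k; fin_cases k <;> simp [Equiv.swap_apply_def]
  rwa [e] at h

private lemma stmt9_cyc (g : AlternatingMap ℝ V ℝ (Fin 3)) (x y z : V) :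
    g ![x, y, z] = g ![z, x, y] := by
  have h1 := g.map_swap ![x, y, z] (i := 0) (j := 2) (by decide)
  have e1 : (![x, y, z] ∘ Equiv.swap (0 : Fin 3) 2) = ![z, y, x] := by
    ext k; fin_cases k <;> simp [Equiv.swap_apply_def]
  rw [e1] at h1
  have h2 := stmt9_swap12 g z x y
  linarith

private lemma stmt9_neg0 (g : AlternatingMap ℝ V ℝ (Fin 3)) (x y z : V) :
    g ![-x, y, z] = -g ![x, y, z] := by
  obtain ⟨F, hF⟩ := stmt9_slot0 g y z
  rw [← hF, ← hF, map_neg]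

private lemma stmt9_neg1 (g : AlternatingMap ℝ V ℝ (Fin 3)) (x y z : V) :
    g ![x, -y, z] = -g ![x, y, z] := by
  obtain ⟨F, hF⟩ := stmt9_slot1 g x z
  rw [← hF, ← hF, map_neg]

private lemma stmt9_parseval (b : OrthonormalBasis (Fin 6) ℝ V) (J : V →ₗ[ℝ] V)
    (hJ2 : ∀ x, J (J x) = -x) (hJg : ∀ x y : V, ⟪J x, J y⟫ = ⟪x, y⟫)
    (F G : V →ₗ[ℝ] ℝ) :
    ∑ i : Fin 6, F (J (b i)) * G (J (b i)) = ∑ i : Fin 6, F (b i) * G (b i) := by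
  haveI : FiniteDimensional ℝ V := Module.Finite.of_basis b.toBasis
  let e : V ≃ₗᵢ[ℝ] V :=
    { toFun := J
      map_add' := J.map_add
      map_smul' := J.map_smul
      invFun := fun x => -J x
      left_inv := fun x => by simp [hJ2 x]
      right_inv := fun x => by simp [hJ2 x]
      norm_map' := fun x => by
        show ‖J x‖ = ‖x‖
        rw [norm_eq_sqrt_real_inner, norm_eq_sqrt_real_inner]
        exact congrArg Real.sqrt (hJg x x) }
  let b' := b.map e
  have hb' : ∀ i, b' i = J (b i) := fun i => rfl
  set u := (InnerProductSpace.toDual ℝ V).symm (LinearMap.toContinuousLinearMap F) with hu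
  set v := (InnerProductSpace.toDual ℝ V).symm (LinearMap.toContinuousLinearMap G) with hv
  have hF : ∀ x, F x = ⟪u, x⟫ := fun x => by
    rw [hu, InnerProductSpace.toDual_symm_apply]; rfl
  have hG : ∀ x, G x = ⟪v, x⟫ := fun x => by
    rw [hv, InnerProductSpace.toDual_symm_apply]; rfl
  have h1 : ∑ i : Fin 6, F (J (b i)) * G (J (b i)) = ⟪u, v⟫ := by
    calc ∑ i : Fin 6, F (J (b i)) * G (J (b i))
        = ∑ i : Fin 6, ⟪u, b' i⟫ * ⟪b' i, v⟫ := by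
          refine Finset.sum_congr rfl fun i _ => ?_
          rw [hb', hF, hG, real_inner_comm (J (b i)) v]
      _ = ⟪u, v⟫ := b'.sum_inner_mul_inner u v
  have h2 : ∑ i : Fin 6, F (b i) * G (b i) = ⟪u, v⟫ := by
    calc ∑ i : Fin 6, F (b i) * G (b i)
        = ∑ i : Fin 6, ⟪u, b i⟫ * ⟪b i, v⟫ := by
          refine Finset.sum_congr rfl fun i _ => ?_
          rw [hF, hG, real_inner_comm (b i) v]
      _ = ⟪u, v⟫ := b.sum_inner_mul_inner u v
  rw [h1, h2]

end auxStmt9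


/-- On a 6-dimensional real inner product space with compatible complex
structure `J`, with `Ω⁺` a 3-form satisfying `Ω⁺(X,Y,Z) = -Ω⁺(X,JY,JZ)` and `η` a
3-form satisfying `η(X,Y,Z) = η(JX,JY,Z) + η(JX,Y,JZ) + η(X,JY,JZ)`, the tensor
`h_η(X,Y) = Σ_{i,j}(η(X,e_i,e_j)Ω⁺(Y,e_i,e_j) + η(Y,e_i,e_j)Ω⁺(X,e_i,e_j))` is
skew `J`-invariant: `h_η(JX,JY) = -h_η(X,Y)`. -/
theorem stmt9 {V : Type} [NormedAddCommGroup V] [InnerProductSpace ℝ V]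
    (b : OrthonormalBasis (Fin 6) ℝ V)
    (J : V →ₗ[ℝ] V)
    (hJ2 : ∀ x : V, J (J x) = -x)
    (hJg : ∀ x y : V, ⟪J x, J y⟫ = ⟪x, y⟫)
    (Ω : AlternatingMap ℝ V ℝ (Fin 3))
    (hΩ : ∀ x y z : V, Ω ![x, y, z] = -Ω ![x, J y, J z])
    (η : AlternatingMap ℝ V ℝ (Fin 3))
    (hη : ∀ x y z : V,
      η ![x, y, z] = η ![J x, J y, z] + η ![J x, y, J z] + η ![x, J y, J z]) :
    ∀ X Y : V,
      (∑ i : Fin 6, ∑ j : Fin 6,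
        (η ![J X, b i, b j] * Ω ![J Y, b i, b j]
          + η ![J Y, b i, b j] * Ω ![J X, b i, b j]))
      = -(∑ i : Fin 6, ∑ j : Fin 6,
        (η ![X, b i, b j] * Ω ![Y, b i, b j]
          + η ![Y, b i, b j] * Ω ![X, b i, b j])) := by
  -- Ω(Ja, Jc, d) = -Ω(a, c, d)
  have hΩ' : ∀ a c d : V, Ω ![J a, J c, d] = -Ω ![a, c, d] := by
    intro a c d
    have h1 : Ω ![d, a, c] = -Ω ![d, J a, J c] := hΩ d a c
    have h2 : Ω ![a, c, d] = Ω ![d, a, c] := stmt9_cyc Ω a c d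
    have h3 : Ω ![J a, J c, d] = Ω ![d, J a, J c] := stmt9_cyc Ω (J a) (J c) d
    linarith
  -- main lemma: S (J X) (J Y) = - S X Y
  have main : ∀ X Y : V,
      (∑ i : Fin 6, ∑ j : Fin 6, η ![J X, b i, b j] * Ω ![J Y, b i, b j])
        = -(∑ i : Fin 6, ∑ j : Fin 6, η ![X, b i, b j] * Ω ![Y, b i, b j]) := by
    intro X Y
    set A1 := ∑ i : Fin 6, ∑ j : Fin 6,
      η ![X, J (b i), b j] * Ω ![J Y, b i, b j] with hA1
    set A2 := ∑ i : Fin 6, ∑ j : Fin 6,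
      η ![X, b i, J (b j)] * Ω ![J Y, b i, b j] with hA2
    set A3 := ∑ i : Fin 6, ∑ j : Fin 6,
      η ![J X, J (b i), J (b j)] * Ω ![J Y, b i, b j] with hA3
    set S1 := ∑ i : Fin 6, ∑ j : Fin 6,
      η ![J X, b i, b j] * Ω ![J Y, b i, b j] with hS1
    set S0 := ∑ i : Fin 6, ∑ j : Fin 6,
      η ![X, b i, b j] * Ω ![Y, b i, b j] with hS0
    -- Step 1 : S1 = -A1 - A2 + A3
    have step1 : S1 = -A1 - A2 + A3 := by
      have hpt : ∀ i j : Fin 6,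
          η ![J X, b i, b j] * Ω ![J Y, b i, b j]
            = -(η ![X, J (b i), b j] * Ω ![J Y, b i, b j])
              - η ![X, b i, J (b j)] * Ω ![J Y, b i, b j]
              + η ![J X, J (b i), J (b j)] * Ω ![J Y, b i, b j] := by
        intro i j
        have h := hη (J X) (b i) (b j)
        rw [hJ2 X, stmt9_neg0, stmt9_neg0] at h
        rw [h]; ring
      rw [hS1, hA1, hA2, hA3]
      rw [Finset.sum_congr rfl fun i _ => Finset.sum_congr rfl fun j _ => hpt i j]
      simp [Finset.sum_add_distrib, Finset.sum_sub_distrib]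
    -- Step 2 : A3 = -S1
    have step2 : A3 = -S1 := by
      have hpt : ∀ i j : Fin 6,
          η ![J X, J (b i), J (b j)] * Ω ![J Y, b i, b j]
            = -(η ![J X, J (b i), J (b j)] * Ω ![J Y, J (b i), J (b j)]) := by
        intro i j
        rw [hΩ (J Y) (b i) (b j)]; ring
      have dblJ : (∑ i : Fin 6, ∑ j : Fin 6,
          η ![J X, J (b i), J (b j)] * Ω ![J Y, J (b i), J (b j)]) = S1 := by
        -- first remove J from the j index
        have hj : ∀ i : Fin 6,
            (∑ j : Fin 6, η ![J X, J (b i), J (b j)] * Ω ![J Y, J (b i), J (b j)])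
              = ∑ j : Fin 6, η ![J X, J (b i), b j] * Ω ![J Y, J (b i), b j] := by
          intro i
          obtain ⟨F, hF⟩ := stmt9_slot2 η (J X) (J (b i))
          obtain ⟨G, hG⟩ := stmt9_slot2 Ω (J Y) (J (b i))
          calc (∑ j : Fin 6, η ![J X, J (b i), J (b j)] * Ω ![J Y, J (b i), J (b j)])
              = ∑ j : Fin 6, F (J (b j)) * G (J (b j)) :=
                Finset.sum_congr rfl fun j _ => by rw [hF, hG]
            _ = ∑ j : Fin 6, F (b j) * G (b j) := stmt9_parseval b J hJ2 hJg F G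
            _ = _ := Finset.sum_congr rfl fun j _ => by rw [hF, hG]
        rw [Finset.sum_congr rfl fun i _ => hj i]
        -- now remove J from the i index
        rw [Finset.sum_comm, hS1, Finset.sum_comm (f := fun i j =>
          η ![J X, b i, b j] * Ω ![J Y, b i, b j])]
        refine Finset.sum_congr rfl fun j _ => ?_
        obtain ⟨F, hF⟩ := stmt9_slot1 η (J X) (b j)
        obtain ⟨G, hG⟩ := stmt9_slot1 Ω (J Y) (b j)
        calc (∑ i : Fin 6, η ![J X, J (b i), b j] * Ω ![J Y, J (b i), b j])
            = ∑ i : Fin 6, F (J (b i)) * G (J (b i)) :=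
              Finset.sum_congr rfl fun i _ => by rw [hF, hG]
          _ = ∑ i : Fin 6, F (b i) * G (b i) := stmt9_parseval b J hJ2 hJg F G
          _ = _ := Finset.sum_congr rfl fun i _ => by rw [hF, hG]
      rw [hA3, Finset.sum_congr rfl fun i _ => Finset.sum_congr rfl fun j _ => hpt i j]
      rw [show (∑ i : Fin 6, ∑ j : Fin 6,
          -(η ![J X, J (b i), J (b j)] * Ω ![J Y, J (b i), J (b j)]))
        = -(∑ i : Fin 6, ∑ j : Fin 6,
          η ![J X, J (b i), J (b j)] * Ω ![J Y, J (b i), J (b j)]) from by simp, dblJ]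
    -- Step 3 : A2 = A1
    have step3 : A2 = A1 := by
      rw [hA2, Finset.sum_comm]
      refine Finset.sum_congr rfl fun i _ => Finset.sum_congr rfl fun j _ => ?_
      have e1 : η ![X, b j, J (b i)] = -η ![X, J (b i), b j] :=
        stmt9_swap12 η X (J (b i)) (b j)
      have e2 : Ω ![J Y, b j, b i] = -Ω ![J Y, b i, b j] :=
        stmt9_swap12 Ω (J Y) (b i) (b j)
      rw [e1, e2]; ring
    -- Step 4 : A1 = S0
    have step4 : A1 = S0 := by
      rw [hA1, hS0]
      rw [Finset.sum_comm (f := fun i j => η ![X, J (b i), b j] * Ω ![J Y, b i, b j]),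
        Finset.sum_comm (f := fun i j => η ![X, b i, b j] * Ω ![Y, b i, b j])]
      refine Finset.sum_congr rfl fun j _ => ?_
      obtain ⟨F0, hF0⟩ := stmt9_slot1 η X (b j)
      obtain ⟨G0, hG0⟩ := stmt9_slot1 Ω (J Y) (b j)
      have key := stmt9_parseval b J hJ2 hJg (F0.comp J) G0
      calc (∑ i : Fin 6, η ![X, J (b i), b j] * Ω ![J Y, b i, b j])
          = ∑ i : Fin 6, (F0.comp J) (b i) * G0 (b i) :=
            Finset.sum_congr rfl fun i _ => by
              rw [LinearMap.comp_apply, hF0, hG0]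
        _ = ∑ i : Fin 6, (F0.comp J) (J (b i)) * G0 (J (b i)) := key.symm
        _ = ∑ i : Fin 6, η ![X, b i, b j] * Ω ![Y, b i, b j] := by
            refine Finset.sum_congr rfl fun i _ => ?_
            rw [LinearMap.comp_apply, hF0, hG0, hJ2, stmt9_neg1, hΩ']
            ring
    linarith [step1, step2, step3, step4]
  intro X Y
  simp only [Finset.sum_add_distrib]
  rw [main X Y, main Y X]
  ring
end

section
/- Let (M,g,J,ω,Ω⁺) be a strict nearly Kähler 6-manifold with Ric = 5g, and let η be a harmonic 2-form. Then the symmetric 2-tensor h(X,Y) = η(JX,Y) is divergence-free: δh = 0. -/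
open RealInnerProductSpace

lemma traceJ {V : Type} [NormedAddCommGroup V] [InnerProductSpace ℝ V]
    (b : OrthonormalBasis (Fin 6) ℝ V) (J : V →ₗ[ℝ] V)
    (hJ2 : ∀ x : V, J (J x) = -x)
    (hJg : ∀ x y : V, ⟪J x, J y⟫ = ⟪x, y⟫)
    (B : V →ₗ[ℝ] V →ₗ[ℝ] ℝ) :
    ∑ i : Fin 6, B (J (b i)) (J (b i)) = ∑ i : Fin 6, B (b i) (b i) := by
  have hanti : ∀ x y : V, ⟪J x, y⟫ = -⟪x, J y⟫ := by
    intro x y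
    have := hJg (J x) y
    rw [hJ2] at this
    rw [← this]
    simp [inner_neg_left]
  have hon : ∀ i j : Fin 6, ⟪b i, b j⟫ = if i = j then (1:ℝ) else 0 :=
    fun i j => by
      rcases b.orthonormal with ⟨h1, h2⟩
      by_cases h : i = j
      · simp [h, real_inner_self_eq_norm_sq, h1 j]
      · simp [h, h2 h]
  calc ∑ i : Fin 6, B (J (b i)) (J (b i))
      = ∑ i : Fin 6, ∑ j : Fin 6, ∑ k : Fin 6,
          ⟪b j, J (b i)⟫ * (⟪b k, J (b i)⟫ * B (b j) (b k)) := by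
        refine Finset.sum_congr rfl fun i _ => ?_
        conv_lhs => rw [← b.sum_repr' (J (b i))]
        simp only [map_sum, map_smul, LinearMap.coe_sum, Finset.sum_apply,
          LinearMap.smul_apply, smul_eq_mul, Finset.mul_sum]
        rw [Finset.sum_comm]
        exact Finset.sum_congr rfl fun x _ => Finset.sum_congr rfl fun y _ => by ring
    _ = ∑ j : Fin 6, ∑ k : Fin 6,
          (∑ i : Fin 6, ⟪b j, J (b i)⟫ * ⟪b k, J (b i)⟫) * B (b j) (b k) := by
        rw [Finset.sum_comm]
        refine Finset.sum_congr rfl fun j _ => ?_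
        rw [Finset.sum_comm]
        refine Finset.sum_congr rfl fun k _ => ?_
        rw [Finset.sum_mul]
        exact Finset.sum_congr rfl fun i _ => by ring
    _ = ∑ j : Fin 6, ∑ k : Fin 6,
          (if j = k then (1:ℝ) else 0) * B (b j) (b k) := by
        refine Finset.sum_congr rfl fun j _ => Finset.sum_congr rfl fun k _ => ?_
        congr 1
        have h1 : ∀ i : Fin 6, ⟪b j, J (b i)⟫ = ⟪(-(J (b j))), b i⟫ := fun i =>
          calc ⟪b j, J (b i)⟫ = ⟪J (b i), b j⟫ := real_inner_comm _ _
            _ = -⟪b i, J (b j)⟫ := hanti _ _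
            _ = -⟪J (b j), b i⟫ := by rw [real_inner_comm]
            _ = ⟪(-(J (b j))), b i⟫ := by rw [inner_neg_left]
        have h2 : ∀ i : Fin 6, ⟪b k, J (b i)⟫ = ⟪b i, (-(J (b k)))⟫ := fun i =>
          calc ⟪b k, J (b i)⟫ = ⟪J (b i), b k⟫ := real_inner_comm _ _
            _ = -⟪b i, J (b k)⟫ := hanti _ _
            _ = ⟪b i, (-(J (b k)))⟫ := by rw [inner_neg_right]
        calc ∑ i : Fin 6, ⟪b j, J (b i)⟫ * ⟪b k, J (b i)⟫
            = ∑ i : Fin 6, ⟪(-(J (b j))), b i⟫ * ⟪b i, (-(J (b k)))⟫ :=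
              Finset.sum_congr rfl fun i _ => by rw [h1 i, h2 i]
          _ = ⟪(-(J (b j))), (-(J (b k)))⟫ := b.sum_inner_mul_inner _ _
          _ = ⟪J (b j), J (b k)⟫ := by rw [inner_neg_neg]
          _ = ⟪b j, b k⟫ := hJg _ _
          _ = if j = k then 1 else 0 := hon j k
    _ = ∑ j : Fin 6, B (b j) (b j) := by
        refine Finset.sum_congr rfl fun j _ => ?_
        simp
/-- On a strict nearly Kähler 6-manifold `(M,g,J,ω,Ω⁺)` with `Ric = 5g`,
the symmetric 2-tensor `h(X,Y) = η(JX,Y)` associated to a harmonic 2-form `η` is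
divergence-free: `δh = 0`.

Pointwise formalization at an arbitrary point `x ∈ M`, working in a normal orthonormal
frame `b`: `η` is the value of the harmonic 2-form at `x`, `Dη` its covariant
derivative (direction in the first slot), and `DJ` the covariant derivative of `J`.
The hypotheses encode: skew-symmetry of `η` and `∇η`, the nearly Kähler condition
`(∇_X J)X = 0`, `J`-invariance of the harmonic form `η` together with the covariant
derivative of that identity, `δη = 0`, `dη = 0`, pointwise orthogonality of `η` to
`ω` (`tr_g h = 0`), and the covariant derivative of that identity.  The conclusion is
`(δh)(v) = -Σ_i (∇_{e_i} h)(e_i, v) = 0`, where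
`(∇_u h)(x,y) = (∇_u η)(Jx, y) + η((∇_u J)x, y)`. -/
theorem stmt16 {V : Type} [NormedAddCommGroup V] [InnerProductSpace ℝ V]
    (b : OrthonormalBasis (Fin 6) ℝ V)
    (J : V →ₗ[ℝ] V)
    (hJ2 : ∀ x : V, J (J x) = -x)
    (hJg : ∀ x y : V, ⟪J x, J y⟫ = ⟪x, y⟫)
    (η : V →ₗ[ℝ] V →ₗ[ℝ] ℝ)
    (Dη : V →ₗ[ℝ] V →ₗ[ℝ] V →ₗ[ℝ] ℝ)
    (DJ : V →ₗ[ℝ] V →ₗ[ℝ] V)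
    (hskew : ∀ x y : V, η x y = -η y x)
    (hDskew : ∀ u x y : V, Dη u x y = -Dη u y x)
    (hNK : ∀ u : V, DJ u u = 0)
    (hJinv : ∀ x y : V, η (J x) (J y) = η x y)
    (hDJinv : ∀ u x y : V,
      Dη u (J x) (J y) + η (DJ u x) (J y) + η (J x) (DJ u y) = Dη u x y)
    (hδη : ∀ v : V, ∑ i : Fin 6, Dη (b i) (b i) v = 0)
    (hdη : ∀ x y z : V, Dη x y z - Dη y x z + Dη z x y = 0)
    (htr : ∑ i : Fin 6, η (J (b i)) (b i) = 0)
    (hDtr : ∀ u : V,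
      ∑ i : Fin 6, (Dη u (J (b i)) (b i) + η (DJ u (b i)) (b i)) = 0) :
    ∀ v : V,
      ∑ i : Fin 6, (Dη (b i) (J (b i)) v + η (DJ (b i) (b i)) v) = 0 := by
  intro v
  -- C := ∑ η (DJ v (b i)) (b i) vanishes
  have hC0 : ∑ i : Fin 6, η (DJ v (b i)) (b i) = 0 := by
    have key : ∀ i : Fin 6,
        -Dη v (J (b i)) (b i) - η (DJ v (b i)) (b i)
          + η (J (b i)) (DJ v (J (b i))) = Dη v (b i) (J (b i)) := by
      intro i
      have h := hDJinv v (b i) (J (b i))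
      rw [hJ2 (b i)] at h
      rw [map_neg (Dη v (J (b i))), map_neg (η (DJ v (b i)))] at h
      linarith
    have hsum : ∑ i : Fin 6,
        (-Dη v (J (b i)) (b i) - η (DJ v (b i)) (b i)
          + η (J (b i)) (DJ v (J (b i))))
        = ∑ i : Fin 6, Dη v (b i) (J (b i)) :=
      Finset.sum_congr rfl fun i _ => key i
    have hdist : ∑ i : Fin 6,
        (-Dη v (J (b i)) (b i) - η (DJ v (b i)) (b i)
          + η (J (b i)) (DJ v (J (b i))))
        = -(∑ i : Fin 6, Dη v (J (b i)) (b i))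
          - (∑ i : Fin 6, η (DJ v (b i)) (b i))
          + ∑ i : Fin 6, η (J (b i)) (DJ v (J (b i))) := by
      rw [Finset.sum_add_distrib, Finset.sum_sub_distrib, ← Finset.sum_neg_distrib]
    have hE : ∑ i : Fin 6, η (J (b i)) (DJ v (J (b i)))
        = ∑ i : Fin 6, η (b i) (DJ v (b i)) := by
      have := traceJ b J hJ2 hJg (η.compl₂ (DJ v))
      simpa [LinearMap.compl₂_apply] using this
    have hE2 : ∑ i : Fin 6, η (b i) (DJ v (b i))
        = -(∑ i : Fin 6, η (DJ v (b i)) (b i)) := by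
      rw [← Finset.sum_neg_distrib]
      exact Finset.sum_congr rfl fun i _ => hskew _ _
    have hRHS : ∑ i : Fin 6, Dη v (b i) (J (b i))
        = -(∑ i : Fin 6, Dη v (J (b i)) (b i)) := by
      rw [← Finset.sum_neg_distrib]
      exact Finset.sum_congr rfl fun i _ => hDskew _ _ _
    rw [hdist, hRHS, hE, hE2] at hsum
    linarith
  -- A := ∑ Dη v (J (b i)) (b i) vanishes
  have hA0 : ∑ i : Fin 6, Dη v (J (b i)) (b i) = 0 := by
    have h := hDtr v
    rw [Finset.sum_add_distrib, hC0, add_zero] at h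
    exact h
  -- reduce goal using nearly Kähler condition
  simp only [hNK, map_zero, LinearMap.zero_apply, add_zero]
  -- S = T - U
  set S := ∑ i : Fin 6, Dη (b i) (J (b i)) v with hS
  have hsplit : S = (∑ i : Fin 6, Dη (J (b i)) (b i) v)
      - ∑ i : Fin 6, Dη v (b i) (J (b i)) := by
    rw [hS, ← Finset.sum_sub_distrib]
    refine Finset.sum_congr rfl fun i _ => ?_
    have := hdη (b i) (J (b i)) v
    linarith
  have hU : ∑ i : Fin 6, Dη v (b i) (J (b i)) = 0 := by
    have : ∑ i : Fin 6, Dη v (b i) (J (b i))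
        = -(∑ i : Fin 6, Dη v (J (b i)) (b i)) := by
      rw [← Finset.sum_neg_distrib]
      exact Finset.sum_congr rfl fun i _ => hDskew _ _ _
    rw [this, hA0, neg_zero]
  have B1 : V →ₗ[ℝ] V →ₗ[ℝ] ℝ := 0
  clear B1
  set B1 : V →ₗ[ℝ] V →ₗ[ℝ] ℝ := LinearMap.mk₂ ℝ (fun x y => Dη x (J y) v)
    (fun x x' y => by simp) (fun c x y => by simp)
    (fun x y y' => by simp) (fun c x y => by simp) with hB1
  have hT : ∑ i : Fin 6, Dη (J (b i)) (b i) v = -S := by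
    have h1 : ∀ i : Fin 6, Dη (J (b i)) (b i) v = -(B1 (J (b i)) (J (b i))) := by
      intro i
      rw [hB1]
      simp only [LinearMap.mk₂_apply, hJ2 (b i), map_neg, LinearMap.neg_apply, neg_neg]
    have h2 : ∑ i : Fin 6, B1 (J (b i)) (J (b i)) = S := by
      rw [traceJ b J hJ2 hJg B1, hS, hB1]
      simp only [LinearMap.mk₂_apply]
    calc ∑ i : Fin 6, Dη (J (b i)) (b i) v
        = ∑ i : Fin 6, -(B1 (J (b i)) (J (b i))) :=
          Finset.sum_congr rfl fun i _ => h1 i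
      _ = -(∑ i : Fin 6, B1 (J (b i)) (J (b i))) := by rw [Finset.sum_neg_distrib]
      _ = -S := by rw [h2]
  rw [hT, hU, sub_zero] at hsplit
  linarith
end

section
/- Let (M,g,J,ω,Ω⁺) be a strict nearly Kähler 6-manifold with Ric = 5g, so that ∇_X Ω⁺ = -X♭ ∧ ω and ∇ω = Ω⁺. Let η be a harmonic 3-form (hence a section of Λ³_{12}, pointwise orthogonal to Ω⁺, Ω⁻, and to all forms α∧ω). Then the symmetric 2-tensor h_η(X,Y) = Σ_{i,j}(η(X,e_i,e_j)Ω⁺(Y,e_i,e_j) + η(Y,e_i,e_j)Ω⁺(X,e_i,e_j)) is divergence-free. -/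
/-!
Expanding `δh_η` by the Leibniz rule gives four frame contractions. The one containing `δη`
vanishes. Since `∇_X Ω⁺ = -X♭ ∧ ω`, contracting `η` against `∇Ω⁺` only ever produces the
`ω`-trace `Σ_{p,q} η(u, e_p, e_q) ω(e_p, e_q)`, which is zero because `η ⊥ Λ³₆`; this kills the
two terms containing `∇Ω⁺` and, through the derivative of `⟨η, Ω⁺⟩ = 0`, also `⟨∇_v η, Ω⁺⟩`.
Finally `dη = 0` and the total antisymmetry of `Ω⁺` give
`Σ_i ⟨(∇_{e_i} η)(v, ·, ·), Ω⁺(e_i, ·, ·)⟩ = ⅓ ⟨∇_v η, Ω⁺⟩ = 0`.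
-/

open RealInnerProductSpace

/-- The covariant derivative `∇_u Ω⁺ = -u♭ ∧ ω` of the real 3-form `Ω⁺` on a strict
nearly Kähler 6-manifold with `Ric = 5g`, evaluated on `(x,y,z)`:
`(∇_u Ω⁺)(x,y,z) = -(g(u,x)ω(y,z) - g(u,y)ω(x,z) + g(u,z)ω(x,y))`,
with `ω(a,b) = g(Ja,b)`. -/
def DOm {V : Type} [NormedAddCommGroup V] [InnerProductSpace ℝ V]
    (J : V →ₗ[ℝ] V) (u x y z : V) : ℝ :=
  -(⟪u, x⟫ * ⟪J y, z⟫ - ⟪u, y⟫ * ⟪J x, z⟫ + ⟪u, z⟫ * ⟪J x, y⟫)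

theorem OrthonormalBasis.sum_inner_mul_apply {ι V : Type*} [Fintype ι] [NormedAddCommGroup V]
    [InnerProductSpace ℝ V] (b : OrthonormalBasis ι ℝ V) (f : V →ₗ[ℝ] ℝ) (v : V) :
    ∑ i, ⟪v, b i⟫ * f (b i) = f v := by
  conv_rhs => rw [← b.sum_repr' v]
  simp [real_inner_comm]

theorem sum_mul_alternating_eq_three_mul_of_closed {ι V : Type*} [Fintype ι] (e : ι → V)
    (T : V → V → V → V → ℝ) (Ω : V → V → V → ℝ)
    (hΩ12 : ∀ x y z, Ω x y z = -Ω y x z) (hΩ23 : ∀ x y z, Ω x y z = -Ω x z y)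
    (hT : ∀ x y z w, T x y z w - T y x z w + T z x y w - T w x y z = 0) (v : V) :
    ∑ i, ∑ p, ∑ q, T v (e i) (e p) (e q) * Ω (e i) (e p) (e q)
      = 3 * ∑ i, ∑ p, ∑ q, T (e i) v (e p) (e q) * Ω (e i) (e p) (e q) := by
  set X := ∑ i, ∑ p, ∑ q, T (e i) v (e p) (e q) * Ω (e i) (e p) (e q)
  have hswap : ∑ i, ∑ p, ∑ q, T (e p) v (e i) (e q) * Ω (e i) (e p) (e q) = -X := by
    rw [Finset.sum_comm]
    simp only [X, ← Finset.sum_neg_distrib]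
    refine Finset.sum_congr rfl fun i _ => Finset.sum_congr rfl fun p _ =>
      Finset.sum_congr rfl fun q _ => ?_
    rw [hΩ12 (e p)]; ring
  have hcycle : ∑ i, ∑ p, ∑ q, T (e q) v (e i) (e p) * Ω (e i) (e p) (e q) = X := by
    rw [Finset.sum_congr rfl fun i _ => Finset.sum_comm, Finset.sum_comm]
    refine Finset.sum_congr rfl fun i _ => Finset.sum_congr rfl fun p _ =>
      Finset.sum_congr rfl fun q _ => ?_
    rw [hΩ23 (e p), hΩ12 (e p), neg_neg]
  have hclosed : ∑ i, ∑ p, ∑ q, (T v (e i) (e p) (e q) - T (e i) v (e p) (e q)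
      + T (e p) v (e i) (e q) - T (e q) v (e i) (e p)) * Ω (e i) (e p) (e q) = 0 := by
    simp only [hT, zero_mul, Finset.sum_const_zero]
  simp only [sub_mul, add_mul, Finset.sum_sub_distrib, Finset.sum_add_distrib, hswap, hcycle]
    at hclosed
  linear_combination hclosed

section NearlyKaehler

variable {ι V : Type} [Fintype ι] [NormedAddCommGroup V] [InnerProductSpace ℝ V]
  (b : OrthonormalBasis ι ℝ V) (J : V →ₗ[ℝ] V) (η : V →ₗ[ℝ] V →ₗ[ℝ] V →ₗ[ℝ] ℝ)

noncomputable def omegaContraction (u : V) : ℝ :=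
  ∑ p, ∑ q, η u (b p) (b q) * ⟪J (b p), b q⟫

theorem sum_mul_DOm_eq (hη23 : ∀ x y z, η x y z = -η x z y) (w u x : V) :
    ∑ p, ∑ q, η w (b p) (b q) * DOm J u x (b p) (b q)
      = -⟪u, x⟫ * omegaContraction b J η w + 2 * ∑ q, η w u (b q) * ⟪J x, b q⟫ := by
  have h2 : ∑ p, ∑ q, ⟪u, b p⟫ * η w (b p) (b q) * ⟪J x, b q⟫
      = ∑ q, η w u (b q) * ⟪J x, b q⟫ := by
    rw [Finset.sum_comm]
    refine Finset.sum_congr rfl fun q _ => ?_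
    rw [← LinearMap.flip_apply (η w) u (b q), ← b.sum_inner_mul_apply ((η w).flip (b q)) u,
      Finset.sum_mul]
    rfl
  have h3 : ∑ p, ∑ q, ⟪u, b q⟫ * η w (b p) (b q) * ⟪J x, b p⟫
      = -∑ p, η w u (b p) * ⟪J x, b p⟫ := by
    rw [← Finset.sum_neg_distrib]
    refine Finset.sum_congr rfl fun p _ => ?_
    rw [hη23 w u, neg_mul, neg_neg, ← b.sum_inner_mul_apply (η w (b p)) u, Finset.sum_mul]
  calc ∑ p, ∑ q, η w (b p) (b q) * DOm J u x (b p) (b q)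
      = ∑ p, ∑ q, (-⟪u, x⟫ * (η w (b p) (b q) * ⟪J (b p), b q⟫)
          + ⟪u, b p⟫ * η w (b p) (b q) * ⟪J x, b q⟫
          - ⟪u, b q⟫ * η w (b p) (b q) * ⟪J x, b p⟫) := by
        refine Finset.sum_congr rfl fun p _ => Finset.sum_congr rfl fun q _ => ?_
        simp only [DOm]; ring
    _ = _ := by
        simp only [Finset.sum_add_distrib, Finset.sum_sub_distrib, ← Finset.mul_sum, h2, h3,
          omegaContraction]
        ring

variable (hη23 : ∀ x y z, η x y z = -η x z y) (hηω : ∀ u, omegaContraction b J η u = 0)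
include hη23 hηω

theorem sum_mul_DOm_trace_eq_zero (v : V) :
    ∑ i, ∑ p, ∑ q, η v (b p) (b q) * DOm J (b i) (b i) (b p) (b q) = 0 := by
  simp only [sum_mul_DOm_eq b J η hη23, hηω, mul_zero, zero_add, ← Finset.mul_sum]
  exact mul_eq_zero_of_right _ (hηω v)

variable (hη12 : ∀ x y z, η x y z = -η y x z)
include hη12

theorem sum_mul_DOm_swap_eq_zero (v : V) :
    ∑ i, ∑ p, ∑ q, η (b i) (b p) (b q) * DOm J (b i) v (b p) (b q) = 0 := by
  have hηxx : ∀ x z, η x x z = 0 := fun x z => by linarith [hη12 x x z]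
  simp [sum_mul_DOm_eq b J η hη23, hηω, hηxx]

theorem sum_mul_DOm_eq_zero (v : V) :
    ∑ i, ∑ p, ∑ q, η (b i) (b p) (b q) * DOm J v (b i) (b p) (b q) = 0 := by
  have hswap : ∑ i, ∑ q, η (b i) v (b q) * ⟪J (b i), b q⟫ = -omegaContraction b J η v := by
    simp only [omegaContraction, ← Finset.sum_neg_distrib]
    refine Finset.sum_congr rfl fun i _ => Finset.sum_congr rfl fun q _ => ?_
    rw [hη12, neg_mul]
  simp only [sum_mul_DOm_eq b J η hη23, hηω, mul_zero, zero_add, ← Finset.mul_sum, hswap,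
    neg_zero]

end NearlyKaehler

/-- Pointwise at a point of `M`, in a normal orthonormal frame `b`: `η` and `Ω` are the values of
the harmonic 3-form and of `Ω⁺`, and `Dη u` is `∇_u η`. The conclusion is
`(δ h_η)(v) = -Σ_i (∇_{e_i} h_η)(e_i, v) = 0`, expanded by the Leibniz rule. -/
theorem stmt17_general {V : Type} [NormedAddCommGroup V] [InnerProductSpace ℝ V]
    (b : OrthonormalBasis (Fin 6) ℝ V)
    (J : V →ₗ[ℝ] V)
    (η Ω : V →ₗ[ℝ] V →ₗ[ℝ] V →ₗ[ℝ] ℝ)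
    (Dη : V →ₗ[ℝ] V →ₗ[ℝ] V →ₗ[ℝ] V →ₗ[ℝ] ℝ)
    (hη12 : ∀ x y z : V, η x y z = -η y x z)
    (hη23 : ∀ x y z : V, η x y z = -η x z y)
    (hΩ12 : ∀ x y z : V, Ω x y z = -Ω y x z)
    (hΩ23 : ∀ x y z : V, Ω x y z = -Ω x z y)
    (hδη : ∀ y z : V, ∑ i : Fin 6, Dη (b i) (b i) y z = 0)
    (hdη : ∀ x y z w : V,
      Dη x y z w - Dη y x z w + Dη z x y w - Dη w x y z = 0)
    (hηω : ∀ u : V,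
      ∑ p : Fin 6, ∑ q : Fin 6, η u (b p) (b q) * ⟪J (b p), b q⟫ = 0)
    (hDηΩ : ∀ u : V,
      ∑ i : Fin 6, ∑ p : Fin 6, ∑ q : Fin 6,
        (Dη u (b i) (b p) (b q) * Ω (b i) (b p) (b q)
          + η (b i) (b p) (b q) * DOm J u (b i) (b p) (b q)) = 0) :
    ∀ v : V,
      ∑ i : Fin 6, ∑ p : Fin 6, ∑ q : Fin 6,
        (Dη (b i) (b i) (b p) (b q) * Ω v (b p) (b q)
          + η (b i) (b p) (b q) * DOm J (b i) v (b p) (b q)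
          + Dη (b i) v (b p) (b q) * Ω (b i) (b p) (b q)
          + η v (b p) (b q) * DOm J (b i) (b i) (b p) (b q)) = 0 := by
  intro v
  have hcoclosed : ∑ i, ∑ p, ∑ q, Dη (b i) (b i) (b p) (b q) * Ω v (b p) (b q) = 0 := by
    rw [Finset.sum_comm]
    refine Finset.sum_eq_zero fun p _ => ?_
    rw [Finset.sum_comm]
    refine Finset.sum_eq_zero fun q _ => ?_
    rw [← Finset.sum_mul, hδη, zero_mul]
  have hclosed : ∑ i, ∑ p, ∑ q, Dη (b i) v (b p) (b q) * Ω (b i) (b p) (b q) = 0 := by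
    have hthree := sum_mul_alternating_eq_three_mul_of_closed b (fun u x y z => Dη u x y z)
      (fun x y z => Ω x y z) hΩ12 hΩ23 hdη v
    have hv := hDηΩ v
    simp only [Finset.sum_add_distrib, sum_mul_DOm_eq_zero b J η hη23 hηω hη12, add_zero] at hv
    linarith
  simp only [Finset.sum_add_distrib, hcoclosed, hclosed, sum_mul_DOm_swap_eq_zero b J η hη23 hηω hη12,
    sum_mul_DOm_trace_eq_zero b J η hη23 hηω, add_zero]

/-- On a strict nearly Kähler 6-manifold `(M,g,J,ω,Ω⁺)` with `Ric = 5g`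
(so `∇_X Ω⁺ = -X♭ ∧ ω` and `∇ω = Ω⁺`), the symmetric 2-tensor
`h_η(X,Y) = Σ_{i,j}(η(X,e_i,e_j)Ω⁺(Y,e_i,e_j) + η(Y,e_i,e_j)Ω⁺(X,e_i,e_j))`
associated to a harmonic 3-form `η` (a section of `Λ³₁₂`, pointwise orthogonal to
`Ω⁺`, `Ω⁻` and to all forms `α ∧ ω`) is divergence-free.

Pointwise formalization at an arbitrary point in a normal orthonormal frame `b`:
`η` and `Ω` are the values of the harmonic 3-form and of `Ω⁺`, `Dη` is the covariant
derivative of `η` (direction first).  The hypotheses encode antisymmetry, `δη = 0`,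
`dη = 0`, pointwise orthogonality `Σ_{p,q} η(u,e_p,e_q)ω(e_p,e_q) = 0` (to `Λ³₆`),
pointwise orthogonality `⟨η, Ω⁺⟩ = 0`, and the covariant derivative of the latter
identity.  The conclusion is `(δ h_η)(v) = -Σ_i (∇_{e_i} h_η)(e_i, v) = 0`. -/
theorem stmt17 {V : Type} [NormedAddCommGroup V] [InnerProductSpace ℝ V]
    (b : OrthonormalBasis (Fin 6) ℝ V)
    (J : V →ₗ[ℝ] V)
    (hJ2 : ∀ x : V, J (J x) = -x)
    (hJg : ∀ x y : V, ⟪J x, J y⟫ = ⟪x, y⟫)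
    (η Ω : V →ₗ[ℝ] V →ₗ[ℝ] V →ₗ[ℝ] ℝ)
    (Dη : V →ₗ[ℝ] V →ₗ[ℝ] V →ₗ[ℝ] V →ₗ[ℝ] ℝ)
    (hη12 : ∀ x y z : V, η x y z = -η y x z)
    (hη23 : ∀ x y z : V, η x y z = -η x z y)
    (hΩ12 : ∀ x y z : V, Ω x y z = -Ω y x z)
    (hΩ23 : ∀ x y z : V, Ω x y z = -Ω x z y)
    (hΩJ : ∀ x y z : V, Ω x (J y) (J z) = -Ω x y z)
    (hDη12 : ∀ u x y z : V, Dη u x y z = -Dη u y x z)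
    (hDη23 : ∀ u x y z : V, Dη u x y z = -Dη u x z y)
    (hδη : ∀ y z : V, ∑ i : Fin 6, Dη (b i) (b i) y z = 0)
    (hdη : ∀ x y z w : V,
      Dη x y z w - Dη y x z w + Dη z x y w - Dη w x y z = 0)
    (hηω : ∀ u : V,
      ∑ p : Fin 6, ∑ q : Fin 6, η u (b p) (b q) * ⟪J (b p), b q⟫ = 0)
    (hηΩ : ∑ i : Fin 6, ∑ p : Fin 6, ∑ q : Fin 6,
      η (b i) (b p) (b q) * Ω (b i) (b p) (b q) = 0)
    (hDηΩ : ∀ u : V,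
      ∑ i : Fin 6, ∑ p : Fin 6, ∑ q : Fin 6,
        (Dη u (b i) (b p) (b q) * Ω (b i) (b p) (b q)
          + η (b i) (b p) (b q) * DOm J u (b i) (b p) (b q)) = 0) :
    ∀ v : V,
      ∑ i : Fin 6, ∑ p : Fin 6, ∑ q : Fin 6,
        (Dη (b i) (b i) (b p) (b q) * Ω v (b p) (b q)
          + η (b i) (b p) (b q) * DOm J (b i) v (b p) (b q)
          + Dη (b i) v (b p) (b q) * Ω (b i) (b p) (b q)
          + η v (b p) (b q) * DOm J (b i) (b i) (b p) (b q)) = 0 :=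
  stmt17_general b J η Ω Dη hη12 hη23 hΩ12 hΩ23 hδη hdη hηω hDηΩ
end
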